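/- Let a > b > 0, let Z₀ be a positive integer, let M > 1 be real, let k be a nonnegative integer, and let t ≥ max(log 2, log(aM/b)) / (a − b). Let Z be a random variable taking values in the nonnegative integers whose probability generating function at the point x = 1 − 1/M satisfies E[x^Z] = ( (b(x−1) − (ax−b)e^{−(a−b)t}) / (a(x−1) − (ax−b)e^{−(a−b)t}) )^{Z₀}. Then P(Z ≤ k) ≤ (1 − 1/M)^{−k} · (4b/a)^{Z₀}. -/

import Mathlib

/-!
Markov's inequality gives `P(Z ≤ k) ≤ x^{-k} E[x^Z]` for `0 < x ≤ 1`. At `x = 1 - 1/M`,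
`E[x^Z]` is the `Z₀`-th power of the one-individual generating function, and once
`e^{-(a-b)t}` is below both `1/2` and `b/(aM)` that value lies in `[0, 4b/a]`.
-/

open Real

/-- Probability generating function at `x` of a linear birth–death process with birth rate `a`
and death rate `b`, started from one individual and observed at time `t`. -/
noncomputable def birthDeathPGF (a b t x : ℝ) : ℝ :=
  (b * (x - 1) - (a * x - b) * exp (-(a - b) * t)) /
    (a * (x - 1) - (a * x - b) * exp (-(a - b) * t))

lemma mul_exp_neg_mul_le_one {r t y : ℝ} (hy : 0 < y) (h : log y ≤ r * t) :
    y * exp (-r * t) ≤ 1 := by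
  rw [← exp_log hy, ← exp_add, exp_le_one_iff]
  linarith

lemma birthDeathPGF_mem_Icc {a b t x : ℝ} (hb : 0 < b) (hab : b < a) (hx0 : 0 ≤ x) (hx1 : x < 1)
    (hE : 2 * exp (-(a - b) * t) ≤ 1) (haE : a * exp (-(a - b) * t) ≤ b * (1 - x)) :
    birthDeathPGF a b t x ∈ Set.Icc 0 (4 * b / a) := by
  have ha : 0 < a := hb.trans hab
  unfold birthDeathPGF
  set E := exp (-(a - b) * t)
  have hE0 : 0 < E := exp_pos _
  set u := 1 - x
  have hu0 : 0 < u := by linarith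
  have hnum : b * (x - 1) - (a * x - b) * E = -(b * u + (a * x - b) * E) := by ring
  have hden : a * (x - 1) - (a * x - b) * E = -(a * u + (a * x - b) * E) := by ring
  rw [hnum, hden, neg_div_neg_eq]
  -- `a u + (a x - b) E = a u (1 - E) + (a - b) E`
  have hden_pos : 0 < a * u + (a * x - b) * E := by nlinarith [mul_pos ha hu0]
  have hnum_nonneg : 0 ≤ b * u + (a * x - b) * E := by
    nlinarith [mul_le_mul_of_nonneg_left haE hu0.le, mul_nonneg hb.le hu0.le]
  refine ⟨div_nonneg hnum_nonneg hden_pos.le, ?_⟩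
  rw [div_le_iff₀ hden_pos, div_mul_eq_mul_div, le_div_iff₀ ha]
  have hc : a * x - b < a := by nlinarith
  rcases le_or_gt 0 (a * x - b) with hc0 | hc0
  · -- `(a x - b) a E ≤ (a x - b) b u ≤ a b u`
    nlinarith [mul_le_mul_of_nonneg_left haE hc0, mul_nonneg hc0 hE0.le, mul_pos ha hu0,
      mul_le_mul_of_nonneg_right hc.le (mul_pos hb hu0).le]
  · -- `b - a x ≤ a u` and `E ≤ 1/2`, so `4 b (b - a x) E ≤ 2 a b u`
    have hcE : (b - a * x) * (2 * E) ≤ a * u * 1 :=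
      mul_le_mul (by linarith) hE (by positivity) (by positivity)
    nlinarith [mul_le_mul_of_nonneg_left hcE hb.le, mul_pos (mul_pos ha hu0) hb,
      mul_nonneg (mul_nonneg ha.le (sub_pos.2 hc0).le) hE0.le]

lemma tsum_ite_le_le_inv_pow_mul_tsum_mul_pow {f : ℕ → ℝ} (hf : ∀ n, 0 ≤ f n)
    (hs : Summable f) {x : ℝ} (hx0 : 0 < x) (hx1 : x ≤ 1) (k : ℕ) :
    (∑' n, if n ≤ k then f n else 0) ≤ (x ^ k)⁻¹ * ∑' n, f n * x ^ n := by
  have hs' : Summable fun n ↦ (x ^ k)⁻¹ * (f n * x ^ n) :=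
    (hs.of_nonneg_of_le (fun n ↦ mul_nonneg (hf n) (pow_nonneg hx0.le n))
      fun n ↦ mul_le_of_le_one_right (hf n) (pow_le_one₀ hx0.le hx1)).mul_left _
  have hterm : ∀ n, (if n ≤ k then f n else 0) ≤ (x ^ k)⁻¹ * (f n * x ^ n) := by
    intro n
    split_ifs with hn
    · rw [le_inv_mul_iff₀ (pow_pos hx0 k), mul_comm]
      exact mul_le_mul_of_nonneg_left (pow_le_pow_of_le_one hx0.le hx1 hn) (hf n)
    · exact mul_nonneg (by positivity) (mul_nonneg (hf n) (pow_nonneg hx0.le n))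
  have hnonneg : ∀ n, 0 ≤ if n ≤ k then f n else 0 := fun n ↦ by split_ifs <;> simp [hf n]
  rw [← tsum_mul_left]
  exact (hs'.of_nonneg_of_le hnonneg hterm).tsum_le_tsum hterm hs'

theorem birthDeath_lower_tail_general (a b : ℝ) (hb : 0 < b) (hab : b < a) (Z₀ : ℕ)
    (M : ℝ) (hM : 1 < M) (k : ℕ) (t : ℝ)
    (ht : max (Real.log 2) (Real.log (a * M / b)) / (a - b) ≤ t)
    (f : ℕ → ℝ) (hf : ∀ n, 0 ≤ f n) (hsum : ∑' n : ℕ, f n = 1)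
    (hpgf : ∑' n : ℕ, f n * (1 - 1 / M) ^ n =
      ((b * ((1 - 1 / M) - 1) - (a * (1 - 1 / M) - b) * Real.exp (-(a - b) * t)) /
        (a * ((1 - 1 / M) - 1) - (a * (1 - 1 / M) - b) * Real.exp (-(a - b) * t))) ^ Z₀) :
    (∑' n : ℕ, if n ≤ k then f n else 0) ≤ ((1 - 1 / M) ^ k)⁻¹ * (4 * b / a) ^ Z₀ := by
  have ha : 0 < a := hb.trans hab
  have hM0 : 0 < M := one_pos.trans hM
  have hlog : max (log 2) (log (a * M / b)) ≤ (a - b) * t := by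
    rwa [div_le_iff₀ (sub_pos.2 hab), mul_comm t] at ht
  have hE2 := mul_exp_neg_mul_le_one two_pos ((le_max_left _ _).trans hlog)
  have hEb := mul_exp_neg_mul_le_one (by positivity) ((le_max_right _ _).trans hlog)
  have hx0 : 0 < 1 - 1 / M := by rw [sub_pos, div_lt_one hM0]; exact hM
  have hx1 : 1 - 1 / M < 1 := by simp [hM0]
  have haE : a * exp (-(a - b) * t) ≤ b * (1 - (1 - 1 / M)) := by
    rw [div_mul_eq_mul_div, div_le_one hb] at hEb
    rw [sub_sub_cancel, mul_one_div, le_div_iff₀ hM0]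
    linarith
  have hpgf_le := birthDeathPGF_mem_Icc hb hab hx0.le hx1 hE2 haE
  have hs : Summable f := by
    by_contra h
    simp [tsum_eq_zero_of_not_summable h] at hsum
  calc (∑' n : ℕ, if n ≤ k then f n else 0)
      ≤ ((1 - 1 / M) ^ k)⁻¹ * ∑' n, f n * (1 - 1 / M) ^ n :=
        tsum_ite_le_le_inv_pow_mul_tsum_mul_pow hf hs hx0 hx1.le k
    _ = ((1 - 1 / M) ^ k)⁻¹ * birthDeathPGF a b t (1 - 1 / M) ^ Z₀ := by rw [hpgf]; rfl
    _ ≤ ((1 - 1 / M) ^ k)⁻¹ * (4 * b / a) ^ Z₀ := by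
        gcongr
        exacts [hpgf_le.1, hpgf_le.2]

/-- Let a > b > 0, Z₀ a positive integer, M > 1 real, k a nonnegative integer
and t ≥ max(log 2, log(aM/b))/(a−b). If Z is an ℕ-valued random variable (with mass
function f) whose probability generating function at x = 1 − 1/M equals the explicit
birth–death expression, then P(Z ≤ k) ≤ (1 − 1/M)^{−k} · (4b/a)^{Z₀}. -/
theorem birthDeath_lower_tail (a b : ℝ) (hb : 0 < b) (hab : b < a) (Z₀ : ℕ) (hZ₀ : 0 < Z₀)
    (M : ℝ) (hM : 1 < M) (k : ℕ) (t : ℝ)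
    (ht : max (Real.log 2) (Real.log (a * M / b)) / (a - b) ≤ t)
    (f : ℕ → ℝ) (hf : ∀ n, 0 ≤ f n) (hsum : ∑' n : ℕ, f n = 1)
    (hpgf : ∑' n : ℕ, f n * (1 - 1 / M) ^ n =
      ((b * ((1 - 1 / M) - 1) - (a * (1 - 1 / M) - b) * Real.exp (-(a - b) * t)) /
        (a * ((1 - 1 / M) - 1) - (a * (1 - 1 / M) - b) * Real.exp (-(a - b) * t))) ^ Z₀) :
    (∑' n : ℕ, if n ≤ k then f n else 0) ≤ ((1 - 1 / M) ^ k)⁻¹ * (4 * b / a) ^ Z₀ :=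
  birthDeath_lower_tail_general a b hb hab Z₀ M hM k t ht f hf hsum hpgf
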